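/- arXiv:2206.02396 — 6 statements merged into one kernel-verified Lean document; each statement's English description precedes it below -/
import Mathlib

section
/- Let f : ℝ → ℝ and let p, q ∈ ℝ² satisfy segment ℝ p q ⊆ T(f). Set m = min(y(p), y(q)) and let p' = p − (0, m), q' = q − (0, m). Then segment ℝ p' q' ⊆ T(f), dist p' q' = dist p q, and min(y(p'), y(q')) = 0, i.e. at least one endpoint of the translated segment lies on the base line y = 0. (Hence there is a longest line segment inside the terrain having an endpoint on the base of the terrain.) -/
/-- The Euclidean plane ℝ². -/
abbrev Plane := EuclideanSpace ℝ (Fin 2)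

/-- The closed region bounded by the terrain `f` and its base (the x-axis). -/
def terrainRegion (f : ℝ → ℝ) : Set Plane := {p | 0 ≤ p 1 ∧ p 1 ≤ f (p 0)}

theorem translate_segment_to_base (f : ℝ → ℝ) (p q : Plane)
    (h : segment ℝ p q ⊆ terrainRegion f)
    (m : ℝ) (hm : m = min (p 1) (q 1))
    (p' q' : Plane)
    (hp : p' = p - m • (EuclideanSpace.single 1 (1 : ℝ)))
    (hq : q' = q - m • (EuclideanSpace.single 1 (1 : ℝ))) :
    segment ℝ p' q' ⊆ terrainRegion f ∧
    dist p' q' = dist p q ∧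
    min (p' 1) (q' 1) = 0 := by
  have hp1 := h (left_mem_segment ℝ p q)
  have hq1 := h (right_mem_segment ℝ p q)
  have hm0 : 0 ≤ m := by
    rw [hm]; exact le_min hp1.1 hq1.1
  refine ⟨?_, ?_, ?_⟩
  · rintro x ⟨a, b, ha, hb, hab, rfl⟩
    have hw : a • p + b • q ∈ terrainRegion f := h ⟨a, b, ha, hb, hab, rfl⟩
    have hw1 : (a • p + b • q) 1 = a * p 1 + b * q 1 := rfl
    have habm : a * m + b * m = m := by rw [← add_mul, hab, one_mul]
    have hx : a • p' + b • q' = (a • p + b • q) - m • (EuclideanSpace.single 1 (1 : ℝ)) := by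
      rw [hp, hq, smul_sub, smul_sub]
      rw [sub_add_sub_comm, ← add_smul, hab, one_smul]
    have hx0 : (a • p' + b • q') 0 = (a • p + b • q) 0 := by
      rw [hx]
      show (a • p + b • q) 0 - m * (EuclideanSpace.single 1 (1 : ℝ)) 0 = _
      simp [EuclideanSpace.single_apply]
    have hx1 : (a • p' + b • q') 1 = (a • p + b • q) 1 - m := by
      rw [hx]
      show (a • p + b • q) 1 - m * (EuclideanSpace.single 1 (1 : ℝ)) 1 = _
      simp [EuclideanSpace.single_apply]
    have hge : m ≤ (a • p + b • q) 1 := by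
      rw [hw1, hm]
      calc min (p 1) (q 1) = a * min (p 1) (q 1) + b * min (p 1) (q 1) := by
            rw [← add_mul, hab, one_mul]
        _ ≤ a * p 1 + b * q 1 :=
            add_le_add (mul_le_mul_of_nonneg_left (min_le_left _ _) ha)
              (mul_le_mul_of_nonneg_left (min_le_right _ _) hb)
    constructor
    · rw [hx1]; linarith
    · rw [hx1, hx0]
      calc (a • p + b • q) 1 - m ≤ (a • p + b • q) 1 := by linarith
        _ ≤ f ((a • p + b • q) 0) := hw.2
  · rw [hp, hq, dist_sub_right]
  · have hp1' : p' 1 = p 1 - m := by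
      rw [hp]
      show p 1 - m * (EuclideanSpace.single 1 (1 : ℝ)) 1 = _
      simp [EuclideanSpace.single_apply]
    have hq1' : q' 1 = q 1 - m := by
      rw [hq]
      show q 1 - m * (EuclideanSpace.single 1 (1 : ℝ)) 1 = _
      simp [EuclideanSpace.single_apply]
    rw [hp1', hq1', hm]
    rcases le_total (p 1) (q 1) with h' | h'
    · rw [min_eq_left h', min_eq_left (by linarith), sub_self]
    · rw [min_eq_right h', min_eq_right (by linarith), sub_self]
end

section
/- Let f : ℝ → ℝ and let p, r ∈ ℝ² with y(p) ≥ 0, y(r) = 0, and segment ℝ p r ⊆ T(f). Let f₀ = (x(p), 0) be the foot of the perpendicular from p to the x-axis. Then convexHull ℝ {p, f₀, r} ⊆ T(f), i.e. the right triangle obtained by dropping the perpendicular from p to the base still lies inside the terrain region. -/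
theorem right_triangle_in_terrain (f : ℝ → ℝ) (p r : Plane)
    (hp : 0 ≤ p 1) (hr : r 1 = 0)
    (hseg : segment ℝ p r ⊆ terrainRegion f)
    (f₀ : Plane) (hf₀ : f₀ = EuclideanSpace.single 0 (p 0)) :
    convexHull ℝ {p, f₀, r} ⊆ terrainRegion f := by
  intro q hq
  rw [show ({p, f₀, r} : Set Plane) = insert p {f₀, r} from rfl,
    convexHull_insert (by simp), convexHull_pair] at hq
  obtain ⟨x, hx, z, hz, hqz⟩ := mem_convexJoin.1 hq
  rw [Set.mem_singleton_iff] at hx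
  rw [hx] at hqz
  obtain ⟨u, v, hu, hv, huv, hz⟩ := hz
  obtain ⟨a, c, ha, hc, hac, hq⟩ := hqz
  have hf0 : f₀ 0 = p 0 := by simp [hf₀]
  have hf1 : f₀ 1 = 0 := by simp [hf₀, EuclideanSpace.single_apply]
  have hs : (a + c*u) • p + (c*v) • r ∈ segment ℝ p r :=
    ⟨a + c*u, c*v, by positivity, by positivity, by nlinarith, rfl⟩
  obtain ⟨hT1, hT2⟩ := hseg hs
  simp only [PiLp.add_apply, PiLp.smul_apply, smul_eq_mul] at hT1 hT2
  have hq0 : q 0 = (a + c*u) * p 0 + (c*v) * r 0 := by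
    subst hq hz
    simp only [PiLp.add_apply, PiLp.smul_apply, smul_eq_mul, hf0]
    ring
  have hq1 : q 1 = a * p 1 := by
    subst hq hz
    simp only [PiLp.add_apply, PiLp.smul_apply, smul_eq_mul, hf1, hr]
    ring
  constructor
  · rw [hq1]; positivity
  · rw [hq1, hq0, hr] at *
    nlinarith [mul_nonneg (mul_nonneg hc hu) hp, hT2]
end

section
/- Let f : ℝ → ℝ and let p, q, r ∈ ℝ² satisfy y(q) = y(r) = 0, q ≠ r, y(p) > 0, and convexHull ℝ {p, q, r} ⊆ T(f). Assume the triangle pqr has largest perimeter among all triangles contained in T(f), i.e. for all a, b, c ∈ ℝ² with convexHull ℝ {a, b, c} ⊆ T(f) one has dist a b + dist b c + dist c a ≤ dist p q + dist q r + dist r p. Then both internal base angles are at most π/2: ∠ p q r ≤ π/2 and ∠ p r q ≤ π/2 (where ∠ a b c denotes the Euclidean angle at the middle vertex b). -/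
open EuclideanGeometry

/-!
If the base angle at `q` were obtuse, the foot `q'` of the perpendicular from `p` to the base
would lie on the far side of `q` from `r`. The triangle `p q' r` still lies in the terrain region,
since each of its points lies vertically below a point of the side `p r`; and replacing the side
`p q` by the legs `p q'`, `q' q` of the right triangle `p q' q` strictly increases the perimeter.
-/

open RealInnerProductSpace in
theorem InnerProductGeometry.angle_le_pi_div_two_iff_inner_nonneg {V : Type*}
    [NormedAddCommGroup V] [InnerProductSpace ℝ V] {x y : V} :
    angle x y ≤ Real.pi / 2 ↔ 0 ≤ ⟪x, y⟫ := by
  rw [angle, Real.arccos_le_pi_div_two]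
  rcases eq_or_ne x 0 with rfl | hx
  · simp
  rcases eq_or_ne y 0 with rfl | hy
  · simp
  rw [le_div_iff₀ (by positivity), zero_mul]

namespace Plane

noncomputable def perimeter (a b c : Plane) : ℝ := dist a b + dist b c + dist c a

theorem perimeter_swap (a b c : Plane) : perimeter a c b = perimeter a b c := by
  simp only [perimeter, dist_comm]; ring

def footOnBase (p : Plane) : Plane := !₂[p 0, 0]

@[simp] theorem footOnBase_zero (p : Plane) : footOnBase p 0 = p 0 := rfl
@[simp] theorem footOnBase_one (p : Plane) : footOnBase p 1 = 0 := rfl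

theorem dist_eq_sqrt (a b : Plane) :
    dist a b = √((a 0 - b 0) ^ 2 + (a 1 - b 1) ^ 2) := by
  simp [EuclideanSpace.dist_eq, Fin.sum_univ_two, Real.dist_eq, sq_abs]

theorem dist_eq_abs_of_one_eq {a b : Plane} (h : a 1 = b 1) : dist a b = |a 0 - b 0| := by
  simp [dist_eq_sqrt, h, Real.sqrt_sq_eq_abs]

theorem dist_eq_abs_of_zero_eq {a b : Plane} (h : a 0 = b 0) : dist a b = |a 1 - b 1| := by
  simp [dist_eq_sqrt, h, Real.sqrt_sq_eq_abs]

theorem dist_lt_of_ne_of_ne {a b : Plane} (h0 : a 0 ≠ b 0) (h1 : a 1 ≠ b 1) :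
    dist a b < |a 0 - b 0| + |a 1 - b 1| := by
  rw [dist_eq_sqrt, Real.sqrt_lt' (by positivity), add_sq, sq_abs, sq_abs]
  have := mul_pos (abs_pos.2 (sub_ne_zero.2 h0)) (abs_pos.2 (sub_ne_zero.2 h1))
  linarith

theorem angle_le_pi_div_two_iff {p q r : Plane} (hq : q 1 = 0) (hr : r 1 = 0) :
    ∠ p q r ≤ Real.pi / 2 ↔ 0 ≤ (p 0 - q 0) * (r 0 - q 0) := by
  rw [angle, InnerProductGeometry.angle_le_pi_div_two_iff_inner_nonneg]
  simp [PiLp.inner_apply, Fin.sum_univ_two, hq, hr, mul_comm]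

theorem mem_terrainRegion_of_le {f : ℝ → ℝ} {s t : Plane} (ht : t ∈ terrainRegion f)
    (h0 : s 0 = t 0) (hs : 0 ≤ s 1) (hst : s 1 ≤ t 1) : s ∈ terrainRegion f :=
  ⟨hs, h0 ▸ hst.trans ht.2⟩

theorem convexHull_footOnBase_subset {f : ℝ → ℝ} {p r : Plane} (hp : 0 ≤ p 1) (hr : r 1 = 0)
    (hpr : segment ℝ p r ⊆ terrainRegion f) :
    convexHull ℝ {p, footOnBase p, r} ⊆ terrainRegion f := by
  intro s hs
  rw [convexHull_insert (by simp), convexHull_pair, convexJoin_singleton_left,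
    Set.mem_iUnion₂] at hs
  obtain ⟨_, ⟨b, c, hb, hc, hbc, rfl⟩, a, d, ha, hd, had, rfl⟩ := hs
  -- the point lies vertically below the point of `segment p r` with the same x-coordinate
  have hseg : (a + d * b) • p + (d * c) • r ∈ segment ℝ p r :=
    ⟨a + d * b, d * c, by positivity, by positivity, by linear_combination had + d * hbc, rfl⟩
  refine mem_terrainRegion_of_le (hpr hseg) ?_ ?_ ?_ <;>
    simp only [smul_add, PiLp.add_apply, PiLp.smul_apply, smul_eq_mul, footOnBase_zero,
      footOnBase_one, hr, mul_zero, add_zero]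
  · ring
  · positivity
  · nlinarith [mul_nonneg (mul_nonneg hd hb) hp]

theorem perimeter_lt_perimeter_footOnBase {p q r : Plane} (hq : q 1 = 0) (hr : r 1 = 0)
    (hp : p 1 ≠ 0) (hqr : (p 0 - q 0) * (r 0 - q 0) < 0) :
    perimeter p q r < perimeter p (footOnBase p) r := by
  have hpq : p 0 ≠ q 0 := fun h => by simp [h] at hqr
  have hsplit : |p 0 - r 0| = |p 0 - q 0| + |q 0 - r 0| := by
    rcases mul_neg_iff.1 hqr with ⟨h1, h2⟩ | ⟨h1, h2⟩
    · rw [abs_of_pos (by linarith), abs_of_pos h1, abs_of_pos (by linarith)]; ring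
    · rw [abs_of_neg (by linarith), abs_of_neg h1, abs_of_neg (by linarith)]; ring
  have hpq_lt := dist_lt_of_ne_of_ne hpq (hq ▸ hp)
  rw [hq, sub_zero] at hpq_lt
  simp only [perimeter, dist_eq_abs_of_one_eq (hq.trans hr.symm),
    dist_eq_abs_of_zero_eq (footOnBase_zero p).symm,
    dist_eq_abs_of_one_eq ((footOnBase_one p).trans hr.symm), footOnBase_zero, footOnBase_one,
    sub_zero, hsplit]
  linarith

theorem angle_le_pi_div_two_of_forall_perimeter_le {f : ℝ → ℝ} {p q r : Plane}
    (hq : q 1 = 0) (hr : r 1 = 0) (hp : 0 < p 1) (hpr : segment ℝ p r ⊆ terrainRegion f)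
    (hopt : ∀ a b c : Plane, convexHull ℝ {a, b, c} ⊆ terrainRegion f →
      perimeter a b c ≤ perimeter p q r) :
    ∠ p q r ≤ Real.pi / 2 := by
  rw [angle_le_pi_div_two_iff hq hr]
  by_contra! hobtuse
  exact (hopt _ _ _ (convexHull_footOnBase_subset hp.le hr hpr)).not_gt
    (perimeter_lt_perimeter_footOnBase hq hr hp.ne' hobtuse)

end Plane

open Plane in
theorem base_angles_at_most_right_general (f : ℝ → ℝ) (p q r : Plane)
    (hq : q 1 = 0) (hr : r 1 = 0) (hp : p 1 > 0)
    (hin : convexHull ℝ {p, q, r} ⊆ terrainRegion f)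
    (hopt : ∀ a b c : Plane, convexHull ℝ {a, b, c} ⊆ terrainRegion f →
      dist a b + dist b c + dist c a ≤ dist p q + dist q r + dist r p) :
    ∠ p q r ≤ Real.pi / 2 ∧ ∠ p r q ≤ Real.pi / 2 :=
  ⟨angle_le_pi_div_two_of_forall_perimeter_le hq hr hp
      ((segment_subset_convexHull (by simp) (by simp)).trans hin) hopt,
    angle_le_pi_div_two_of_forall_perimeter_le hr hq hp
      ((segment_subset_convexHull (by simp) (by simp)).trans hin)
      fun a b c h => (hopt a b c h).trans_eq (perimeter_swap p q r).symm⟩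

theorem base_angles_at_most_right (f : ℝ → ℝ) (p q r : Plane)
    (hq : q 1 = 0) (hr : r 1 = 0) (hqr : q ≠ r) (hp : p 1 > 0)
    (hin : convexHull ℝ {p, q, r} ⊆ terrainRegion f)
    (hopt : ∀ a b c : Plane, convexHull ℝ {a, b, c} ⊆ terrainRegion f →
      dist a b + dist b c + dist c a ≤ dist p q + dist q r + dist r p) :
    ∠ p q r ≤ Real.pi / 2 ∧ ∠ p r q ≤ Real.pi / 2 :=
  base_angles_at_most_right_general f p q r hq hr hp hin hopt
end

section
/- Let f : ℝ → ℝ and let p, q, r ∈ ℝ². If segment ℝ p q ⊆ T(f), segment ℝ q r ⊆ T(f), and segment ℝ p r ⊆ T(f) (i.e. the three points are pairwise visible inside the terrain region), then convexHull ℝ {p, q, r} ⊆ T(f), i.e. the whole triangle they span lies inside the terrain region. -/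
lemma vis_core (f : ℝ → ℝ) (px py qx qy rx ry a b c z0 z1 : ℝ)
    (E1 : ∀ t : ℝ, 0 ≤ t → t ≤ 1 → (1-t) * py + t * qy ≤ f ((1-t) * px + t * qx))
    (E2 : ∀ t : ℝ, 0 ≤ t → t ≤ 1 → (1-t) * py + t * ry ≤ f ((1-t) * px + t * rx))
    (ha : 0 ≤ a) (hb : 0 ≤ b) (hc : 0 ≤ c) (habc : a + b + c = 1)
    (hz0 : z0 = a * px + b * qx + c * rx) (hz1 : z1 = a * py + b * qy + c * ry)
    (h1 : px ≤ qx) (h2 : px ≤ rx) (h3 : z0 ≤ qx) (h4 : z0 ≤ rx) :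
    z1 ≤ f z0 := by
  have hD : z0 - px = b * (qx - px) + c * (rx - px) := by
    linear_combination hz0 + px * habc
  have hpz : px ≤ z0 := by
    nlinarith [mul_nonneg hb (sub_nonneg.mpr h1), mul_nonneg hc (sub_nonneg.mpr h2)]
  rcases hb.eq_or_lt with hb0 | hb0
  · -- b = 0
    have hb' : b = 0 := hb0.symm
    subst hb'
    have h := E2 c hc (by linarith)
    have e : (1 - c) * px + c * rx = z0 := by linear_combination -hz0 - px * habc
    rw [e] at h
    have ha' : a = 1 - c := by linarith
    rw [ha'] at hz1
    linarith
  rcases hc.eq_or_lt with hc0 | hc0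
  · -- c = 0
    have hc' : c = 0 := hc0.symm
    subst hc'
    have h := E1 b hb (by linarith)
    have e : (1 - b) * px + b * qx = z0 := by linear_combination -hz0 - px * habc
    rw [e] at h
    have ha' : a = 1 - b := by linarith
    rw [ha'] at hz1
    linarith
  rcases h1.eq_or_lt with hq | hq
  · -- px = qx : forces z0 = px, rx = px
    have hz0px : z0 = px := le_antisymm (hq ▸ h3) hpz
    have h5 : c * (rx - px) = 0 := by rw [← hq] at hD; linarith
    have h6 : rx - px = 0 := by
      rcases mul_eq_zero.mp h5 with h | h
      · exact absurd h hc0.ne'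
      · exact h
    have hrx : rx = px := by linarith
    have hy1 := E1 0 le_rfl zero_le_one
    have hy2 := E1 1 zero_le_one le_rfl
    have hy3 := E2 1 zero_le_one le_rfl
    norm_num at hy1 hy2 hy3
    rw [← hq] at hy2
    rw [hrx] at hy3
    rw [hz0px]
    have hsum : a * f px + b * f px + c * f px = f px := by linear_combination (f px) * habc
    nlinarith [mul_le_mul_of_nonneg_left hy1 ha, mul_le_mul_of_nonneg_left hy2 hb,
      mul_le_mul_of_nonneg_left hy3 hc]
  rcases h2.eq_or_lt with hr | hr
  · -- px = rx : contradiction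
    exfalso
    rw [← hr] at h4 hD
    nlinarith [mul_pos hb0 (sub_pos.mpr hq)]
  · -- main case: px < qx, px < rx, b,c > 0
    have hqne : qx - px ≠ 0 := sub_ne_zero.mpr hq.ne'
    have hrne : rx - px ≠ 0 := sub_ne_zero.mpr hr.ne'
    have hDpos : 0 < b * (qx - px) + c * (rx - px) :=
      add_pos (mul_pos hb0 (sub_pos.mpr hq)) (mul_pos hc0 (sub_pos.mpr hr))
    set D := b * (qx - px) + c * (rx - px) with hDdef
    set α := (z0 - px) / (qx - px) with hαdef
    set β := (z0 - px) / (rx - px) with hβdef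
    set s := c * (rx - px) / D with hsdef
    have hα0 : 0 ≤ α := div_nonneg (by linarith) (by linarith)
    have hα1 : α ≤ 1 := (div_le_one (by linarith)).mpr (by linarith)
    have hβ0 : 0 ≤ β := div_nonneg (by linarith) (by linarith)
    have hβ1 : β ≤ 1 := (div_le_one (by linarith)).mpr (by linarith)
    have hs0 : 0 ≤ s := div_nonneg (mul_nonneg hc (by linarith)) hDpos.le
    have hs1 : s ≤ 1 := (div_le_one hDpos).mpr (by nlinarith [mul_pos hb0 (sub_pos.mpr hq)])
    have hu := E1 α hα0 hα1
    have hv := E2 β hβ0 hβ1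
    have hxu : (1 - α) * px + α * qx = z0 := by
      rw [hαdef]; field_simp; ring
    have hxv : (1 - β) * px + β * rx = z0 := by
      rw [hβdef]; field_simp; ring
    rw [hxu] at hu
    rw [hxv] at hv
    have e1 : (1 - s) * α = b := by
      rw [hsdef, hαdef, hD]
      field_simp
      linear_combination hDdef
    have e2 : s * β = c := by
      rw [hsdef, hβdef, hD]
      field_simp
    have e3 : (1 - s) * (1 - α) + s * (1 - β) = a := by
      linear_combination -e1 - e2 - habc
    have key : z1 = (1-s)*((1-α)*py + α*qy) + s*((1-β)*py + β*ry) := by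
      linear_combination hz1 - py * e3 - qy * e1 - ry * e2
    rw [key]
    have h1s : (0:ℝ) ≤ 1 - s := by linarith
    nlinarith [mul_le_mul_of_nonneg_left hu h1s, mul_le_mul_of_nonneg_left hv hs0]

lemma vis_coreM (f : ℝ → ℝ) (px py qx qy rx ry a b c z0 z1 : ℝ)
    (E1 : ∀ t : ℝ, 0 ≤ t → t ≤ 1 → (1-t) * py + t * qy ≤ f ((1-t) * px + t * qx))
    (E2 : ∀ t : ℝ, 0 ≤ t → t ≤ 1 → (1-t) * py + t * ry ≤ f ((1-t) * px + t * rx))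
    (ha : 0 ≤ a) (hb : 0 ≤ b) (hc : 0 ≤ c) (habc : a + b + c = 1)
    (hz0 : z0 = a * px + b * qx + c * rx) (hz1 : z1 = a * py + b * qy + c * ry)
    (h1 : qx ≤ px) (h2 : rx ≤ px) (h3 : qx ≤ z0) (h4 : rx ≤ z0) :
    z1 ≤ f z0 := by
  have h := vis_core (fun x => f (-x)) (-px) py (-qx) qy (-rx) ry a b c (-z0) z1
    (fun t ht0 ht1 => by
      have h := E1 t ht0 ht1
      show (1-t) * py + t * qy ≤ f (-((1-t) * (-px) + t * (-qx)))
      rw [show -((1-t) * (-px) + t * (-qx)) = (1-t) * px + t * qx by ring]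
      exact h)
    (fun t ht0 ht1 => by
      have h := E2 t ht0 ht1
      show (1-t) * py + t * ry ≤ f (-((1-t) * (-px) + t * (-rx)))
      rw [show -((1-t) * (-px) + t * (-rx)) = (1-t) * px + t * rx by ring]
      exact h)
    ha hb hc habc (by rw [hz0]; ring) hz1
    (by linarith) (by linarith) (by linarith) (by linarith)
  simpa using h

lemma edge_of_seg (f : ℝ → ℝ) (p q : Plane) (h : segment ℝ p q ⊆ terrainRegion f) :
    ∀ t : ℝ, 0 ≤ t → t ≤ 1 → (1-t) * p 1 + t * q 1 ≤ f ((1-t) * p 0 + t * q 0) := by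
  intro t ht0 ht1
  have hm : (1-t) • p + t • q ∈ segment ℝ p q := ⟨1-t, t, by linarith, ht0, by ring, rfl⟩
  have h2 := (h hm).2
  simpa using h2

set_option maxHeartbeats 4000000 in
theorem pairwise_visible_triangle (f : ℝ → ℝ) (p q r : Plane)
    (hpq : segment ℝ p q ⊆ terrainRegion f)
    (hqr : segment ℝ q r ⊆ terrainRegion f)
    (hpr : segment ℝ p r ⊆ terrainRegion f) :
    convexHull ℝ {p, q, r} ⊆ terrainRegion f := by
  have Epq := edge_of_seg f p q hpq
  have Eqp := edge_of_seg f q p (by rw [segment_symm]; exact hpq)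
  have Epr := edge_of_seg f p r hpr
  have Erp := edge_of_seg f r p (by rw [segment_symm]; exact hpr)
  have Eqr := edge_of_seg f q r hqr
  have Erq := edge_of_seg f r q (by rw [segment_symm]; exact hqr)
  have hp1 : 0 ≤ p 1 := (hpq (left_mem_segment ℝ p q)).1
  have hq1 : 0 ≤ q 1 := (hpq (right_mem_segment ℝ p q)).1
  have hr1 : 0 ≤ r 1 := (hpr (right_mem_segment ℝ p r)).1
  intro z hz
  rw [← convexJoin_singleton_segment, mem_convexJoin] at hz
  obtain ⟨x, hx, w, hw, hzw⟩ := hz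
  obtain rfl : p = x := hx.symm
  obtain ⟨u, v, hu, hv, huv, rfl⟩ := hw
  obtain ⟨s, t, hs, ht, hst, rfl⟩ := hzw
  have hx0 : (s • p + t • (u • q + v • r)) 0 = s * p 0 + t * u * q 0 + t * v * r 0 := by
    simp [PiLp.add_apply, PiLp.smul_apply, smul_eq_mul]; ring
  have hx1 : (s • p + t • (u • q + v • r)) 1 = s * p 1 + t * u * q 1 + t * v * r 1 := by
    simp [PiLp.add_apply, PiLp.smul_apply, smul_eq_mul]; ring
  have hbu : 0 ≤ t * u := mul_nonneg ht hu
  have hcv : 0 ≤ t * v := mul_nonneg ht hv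
  have habc : s + t * u + t * v = 1 := by nlinarith
  constructor
  · rw [hx1]
    have := mul_nonneg hs hp1
    have := mul_nonneg hbu hq1
    have := mul_nonneg hcv hr1
    linarith
  · rw [hx1, hx0]
    rcases le_total (p 0) (q 0) with o1 | o1 <;>
    rcases le_total (q 0) (r 0) with o2 | o2 <;>
    rcases le_total (p 0) (r 0) with o3 | o3 <;>
    rcases le_total (s * p 0 + t * u * q 0 + t * v * r 0) (p 0) with m1 | m1 <;>
    rcases le_total (s * p 0 + t * u * q 0 + t * v * r 0) (q 0) with m2 | m2 <;>
    rcases le_total (s * p 0 + t * u * q 0 + t * v * r 0) (r 0) with m3 | m3 <;>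
    first
    | exact vis_core f (p 0) (p 1) (q 0) (q 1) (r 0) (r 1) s (t*u) (t*v) _ _
        Epq Epr hs hbu hcv habc rfl rfl (by linarith) (by linarith) (by linarith) (by linarith)
    | exact vis_core f (q 0) (q 1) (p 0) (p 1) (r 0) (r 1) (t*u) s (t*v) _ _
        Eqp Eqr hbu hs hcv (by linarith) (by ring) (by ring) (by linarith) (by linarith) (by linarith) (by linarith)
    | exact vis_core f (r 0) (r 1) (p 0) (p 1) (q 0) (q 1) (t*v) s (t*u) _ _
        Erp Erq hcv hs hbu (by linarith) (by ring) (by ring) (by linarith) (by linarith) (by linarith) (by linarith)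
    | exact vis_coreM f (p 0) (p 1) (q 0) (q 1) (r 0) (r 1) s (t*u) (t*v) _ _
        Epq Epr hs hbu hcv habc rfl rfl (by linarith) (by linarith) (by linarith) (by linarith)
    | exact vis_coreM f (q 0) (q 1) (p 0) (p 1) (r 0) (r 1) (t*u) s (t*v) _ _
        Eqp Eqr hbu hs hcv (by linarith) (by ring) (by ring) (by linarith) (by linarith) (by linarith) (by linarith)
    | exact vis_coreM f (r 0) (r 1) (p 0) (p 1) (q 0) (q 1) (t*v) s (t*u) _ _
        Erp Erq hcv hs hbu (by linarith) (by ring) (by ring) (by linarith) (by linarith) (by linarith) (by linarith)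
end

section
/- Let f : ℝ → ℝ, let k ∈ ℕ, and let v : Fin k → ℝ² be points such that segment ℝ (v i) (v j) ⊆ T(f) for all i, j : Fin k (i.e. the k points are pairwise visible inside the terrain region). Then convexHull ℝ (Set.range v) ⊆ T(f), i.e. the convex polygon spanned by the k points lies entirely inside the terrain region. -/
/-!
Cut the hull by the vertical line `x = c` through one of its points `p = ∑ wᵢ vᵢ`, and put
`dᵢ = x(vᵢ) - c`, so that `∑ wᵢ dᵢ = 0`. With `D = ∑_{dⱼ > 0} wⱼ dⱼ`, the bilinear identity
`∑_{dᵢ ≤ 0 < dⱼ} wᵢ wⱼ (dⱼ vᵢ - dᵢ vⱼ) = D • p` writes `p` as a convex combination, with weights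
`wᵢ wⱼ (dⱼ - dᵢ) / D`, of the points where the segments `[vᵢ, vⱼ]` cross the line; if `D = 0`,
all the weight already sits on the line. By visibility these crossing points lie in `T(f)`, and
`T(f)` meets every vertical line in a segment, so `p ∈ T(f)`.
-/

open Finset

section CommRing

variable {R E ι : Type*} [CommRing R] [AddCommGroup E] [Module R E]

theorem sum_product_mul_smul_sub_smul (s t : Finset ι) (w d : ι → R) (z : ι → E) :
    ∑ x ∈ s ×ˢ t, (w x.1 * w x.2) • (d x.2 • z x.1 - d x.1 • z x.2) =
      (∑ j ∈ t, w j * d j) • ∑ i ∈ s, w i • z i -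
        (∑ i ∈ s, w i * d i) • ∑ j ∈ t, w j • z j := by
  simp only [sum_product, smul_sub, sum_sub_distrib, smul_sum, smul_smul]
  congr 1
  · refine sum_congr rfl fun i _ => ?_
    rw [← sum_smul, sum_mul]
    exact congrArg (· • z i) (sum_congr rfl fun j _ => by ring)
  · rw [sum_comm]
    refine sum_congr rfl fun j _ => ?_
    rw [← sum_smul, sum_mul]
    exact congrArg (· • z j) (sum_congr rfl fun i _ => by ring)

end CommRing

section OrderedField

variable {𝕜 E ι : Type*} [Field 𝕜] [LinearOrder 𝕜] [IsStrictOrderedRing 𝕜]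
  [AddCommGroup E] [Module 𝕜 E]

theorem smul_sub_smul_mem_segment {a b : E} {s t : 𝕜} (hs : s ≤ 0) (ht : 0 < t) :
    (t - s)⁻¹ • (t • a - s • b) ∈ segment 𝕜 a b := by
  have hts : 0 < t - s := by linarith
  refine ⟨t / (t - s), -s / (t - s), by positivity, div_nonneg (by linarith) hts.le, ?_, ?_⟩
  · field_simp; ring
  · module

theorem sum_smul_mem_convexHull_of_ne_zero [Fintype ι] {S : Set E} {w : ι → 𝕜} {z : ι → E}
    (hw₀ : ∀ i, 0 ≤ w i) (hw₁ : ∑ i, w i = 1) (hz : ∀ i, w i ≠ 0 → z i ∈ S) :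
    ∑ i, w i • z i ∈ convexHull 𝕜 S := by
  classical
  rw [← centerMass_eq_of_sum_1 _ _ hw₁, ← centerMass_filter_ne_zero]
  refine centerMass_mem_convexHull _ (fun i _ => hw₀ i) ?_ fun i hi => hz i (mem_filter.1 hi).2
  rw [sum_filter_ne_zero, hw₁]
  exact one_pos

variable [Fintype ι] {w d : ι → 𝕜}

theorem mul_eq_zero_of_sum_filter_pos_eq_zero (hw₀ : ∀ i, 0 ≤ w i)
    (hwd : ∑ i, w i * d i = 0) (hpos : ∑ i with 0 < d i, w i * d i = 0) (i : ι) :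
    w i * d i = 0 := by
  have hnonpos : ∑ i with ¬0 < d i, w i * d i = 0 := by
    have := sum_filter_add_sum_filter_not univ (fun i => 0 < d i) fun i => w i * d i
    rwa [hpos, zero_add, hwd] at this
  by_cases h : 0 < d i
  · exact (sum_eq_zero_iff_of_nonneg fun j hj => mul_nonneg (hw₀ j) (mem_filter.1 hj).2.le).1
      hpos i (mem_filter.2 ⟨mem_univ i, h⟩)
  · exact (sum_eq_zero_iff_of_nonpos fun j hj =>
      mul_nonpos_of_nonneg_of_nonpos (hw₀ j) (not_lt.1 (mem_filter.1 hj).2)).1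
      hnonpos i (mem_filter.2 ⟨mem_univ i, h⟩)

theorem sum_smul_mem_convexHull_crossings (z : ι → E) (hw₀ : ∀ i, 0 ≤ w i)
    (hw₁ : ∑ i, w i = 1) (hwd : ∑ i, w i * d i = 0)
    (hpos : 0 < ∑ i with 0 < d i, w i * d i) :
    ∑ i, w i • z i ∈ convexHull 𝕜
      {p | ∃ i j, d i ≤ 0 ∧ 0 < d j ∧ (d j - d i)⁻¹ • (d j • z i - d i • z j) = p} := by
  set L := univ.filter fun i => ¬0 < d i
  set R := univ.filter fun i => 0 < d i
  set D := ∑ j ∈ R, w j * d j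
  have hLD : ∑ i ∈ L, w i * d i = -D := by
    rw [eq_neg_iff_add_eq_zero, add_comm, sum_filter_add_sum_filter_not, hwd]
  have hgap : ∀ x ∈ L ×ˢ R, d x.1 ≤ 0 ∧ 0 < d x.2 := fun x hx => by
    obtain ⟨hL, hR⟩ := mem_product.1 hx
    exact ⟨not_lt.1 (mem_filter.1 hL).2, (mem_filter.1 hR).2⟩
  set μ : ι × ι → 𝕜 := fun x => w x.1 * w x.2 * (d x.2 - d x.1)
  set q : ι × ι → E := fun x => (d x.2 - d x.1)⁻¹ • (d x.2 • z x.1 - d x.1 • z x.2)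
  have hμq : ∀ x ∈ L ×ˢ R, μ x • q x = (w x.1 * w x.2) • (d x.2 • z x.1 - d x.1 • z x.2) :=
    fun x hx => by
      have hne : d x.2 - d x.1 ≠ 0 := by linarith [hgap x hx]
      simp only [μ, q, smul_smul, mul_assoc, mul_inv_cancel₀ hne, mul_one]
  have hμ : ∑ x ∈ L ×ˢ R, μ x = D := by
    have := sum_product_mul_smul_sub_smul L R w d fun _ => (1 : 𝕜)
    simp only [smul_eq_mul, mul_one, hLD] at this
    rw [← mul_one D, ← hw₁, ← sum_filter_add_sum_filter_not univ (fun i => 0 < d i)]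
    exact this.trans (by ring)
  have hp : (L ×ˢ R).centerMass μ q = ∑ i, w i • z i := by
    rw [centerMass, sum_congr rfl hμq, sum_product_mul_smul_sub_smul, hLD, hμ, neg_smul,
      sub_neg_eq_add, ← smul_add, add_comm, sum_filter_add_sum_filter_not,
      inv_smul_smul₀ hpos.ne']
  rw [← hp]
  refine centerMass_mem_convexHull _ (fun x hx => ?_) (hμ ▸ hpos) fun x hx =>
    ⟨x.1, x.2, (hgap x hx).1, (hgap x hx).2, rfl⟩
  obtain ⟨h₁, h₂⟩ := hgap x hx
  exact mul_nonneg (mul_nonneg (hw₀ _) (hw₀ _)) (by linarith)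

theorem convexHull_inter_preimage_subset (s : Set E) (ℓ : E →ₗ[𝕜] 𝕜) (c : 𝕜) :
    convexHull 𝕜 s ∩ ℓ ⁻¹' {c} ⊆
      convexHull 𝕜 (⋃ a ∈ s, ⋃ b ∈ s, segment 𝕜 a b ∩ ℓ ⁻¹' {c}) := by
  rintro _ ⟨hx, hxc⟩
  obtain ⟨ι, _, w, z, hw₀, hw₁, hz, rfl⟩ := mem_convexHull_iff_exists_fintype.1 hx
  set d : ι → 𝕜 := fun i => ℓ (z i) - c
  have hℓ : ∀ i, ℓ (z i) = d i + c := fun i => by simp [d]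
  have hwd : ∑ i, w i * d i = 0 := by
    simp only [d, mul_sub, sum_sub_distrib, ← sum_mul, hw₁, one_mul, sub_eq_zero]
    simpa using hxc
  have hcross : ∀ i j, segment 𝕜 (z i) (z j) ∩ ℓ ⁻¹' {c} ⊆
      ⋃ a ∈ s, ⋃ b ∈ s, segment 𝕜 a b ∩ ℓ ⁻¹' {c} := fun i j =>
    Set.subset_iUnion₂_of_subset (z i) (hz i) (Set.subset_iUnion₂_of_subset (z j) (hz j) le_rfl)
  have hD : 0 ≤ ∑ i with 0 < d i, w i * d i :=
    sum_nonneg fun j hj => mul_nonneg (hw₀ j) (mem_filter.1 hj).2.le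
  rcases hD.eq_or_lt with hD | hD
  · refine sum_smul_mem_convexHull_of_ne_zero hw₀ hw₁ fun i hi => hcross i i ⟨by simp, ?_⟩
    have hdi := mul_eq_zero.1 (mul_eq_zero_of_sum_filter_pos_eq_zero hw₀ hwd hD.symm i)
    simpa [hℓ] using hdi.resolve_left hi
  · refine convexHull_mono ?_ (sum_smul_mem_convexHull_crossings z hw₀ hw₁ hwd hD)
    rintro _ ⟨i, j, hi, hj, rfl⟩
    refine hcross i j ⟨smul_sub_smul_mem_segment hi hj, ?_⟩
    have hne : d j - d i ≠ 0 := by linarith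
    simp only [Set.mem_preimage, Set.mem_singleton_iff, map_smul, map_sub, smul_eq_mul, hℓ]
    field_simp
    ring

end OrderedField

theorem convex_terrainRegion_inter_vertical (f : ℝ → ℝ) (c : ℝ) :
    Convex ℝ (terrainRegion f ∩ {p | p 0 = c}) := by
  rintro p ⟨⟨hp₀, hp₁⟩, hpc⟩ q ⟨⟨hq₀, hq₁⟩, hqc⟩ a b ha hb hab
  simp only [Set.mem_ofPred_eq] at hpc hqc
  simp only [terrainRegion, Set.mem_inter_iff, Set.mem_ofPred_eq, PiLp.add_apply,
    PiLp.smul_apply, smul_eq_mul, hpc, hqc] at hp₁ hq₁ ⊢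
  refine ⟨⟨by positivity, ?_⟩, by rw [← add_mul, hab, one_mul]⟩
  rw [← add_mul, hab, one_mul]
  nlinarith

theorem pairwise_visible_polygon (f : ℝ → ℝ) (k : ℕ) (v : Fin k → Plane)
    (hvis : ∀ i j : Fin k, segment ℝ (v i) (v j) ⊆ terrainRegion f) :
    convexHull ℝ (Set.range v) ⊆ terrainRegion f := by
  intro p hp
  have hslice := convexHull_inter_preimage_subset (Set.range v) (EuclideanSpace.projₗ 0) (p 0)
    ⟨hp, rfl⟩
  have hcross : (⋃ a ∈ Set.range v, ⋃ b ∈ Set.range v,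
      segment ℝ a b ∩ EuclideanSpace.projₗ 0 ⁻¹' {p 0}) ⊆ terrainRegion f ∩ {q | q 0 = p 0} := by
    simp only [Set.iUnion₂_subset_iff, Set.forall_mem_range]
    exact fun i j => Set.inter_subset_inter (hvis i j) subset_rfl
  exact (convexHull_min hcross (convex_terrainRegion_inter_vertical f (p 0)) hslice).1
end

section
/- Let S ⊆ ℝ² and u, w ∈ ℝ² with segment ℝ u w ⊆ S, and suppose the segment from u to w is a longest segment in S, i.e. for all x, y ∈ ℝ², segment ℝ x y ⊆ S implies dist x y ≤ dist u w. Let t ∈ ℝ² be any point with convexHull ℝ {u, w, t} ⊆ S. Then the triangle u w t is a 3-approximation of the largest-perimeter triangle in S: for all a, b, c ∈ ℝ² with convexHull ℝ {a, b, c} ⊆ S, dist a b + dist b c + dist c a ≤ 3 · (dist u w + dist w t + dist t u). -/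
theorem diameter_triangle_three_approx (S : Set Plane) (u w : Plane)
    (huw : segment ℝ u w ⊆ S)
    (hmax : ∀ x y : Plane, segment ℝ x y ⊆ S → dist x y ≤ dist u w)
    (t : Plane) (ht : convexHull ℝ {u, w, t} ⊆ S)
    (a b c : Plane) (habc : convexHull ℝ {a, b, c} ⊆ S) :
    dist a b + dist b c + dist c a ≤ 3 * (dist u w + dist w t + dist t u) := by
  have seg : ∀ x y : Plane, x ∈ ({a, b, c} : Set Plane) → y ∈ ({a, b, c} : Set Plane) →
      segment ℝ x y ⊆ S := by
    intro x y hx hy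
    refine (segment_subset_convexHull hx hy).trans habc
  have h1 := hmax a b (seg a b (by simp) (by simp))
  have h2 := hmax b c (seg b c (by simp) (by simp))
  have h3 := hmax c a (seg c a (by simp) (by simp))
  have := dist_nonneg (x := w) (y := t)
  have := dist_nonneg (x := t) (y := u)
  linarith
end
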